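/- arXiv:1201.4363 — 3 statements merged into one kernel-verified Lean document; each statement's English description precedes it below -/
import Mathlib

section
/- Let $G$ be the wreath product $S_3 \wr \mathbb{Z}$ of the symmetric group on three letters with the infinite cyclic group $\langle t \rangle$ (restricted wreath product). Then every homomorphism $\theta$ from $G$ to a finite group kills the commutator subgroup of the base copy of $S_3$ at position $0$; consequently $G$ is not residually finite. -/
/-- The base of the restricted wreath product `A ≀ ℤ`: finitely supported
functions `ℤ → A`. -/
def wrBase (A : Type) [Group A] : Subgroup (∀ _ : ℤ, A) where
  carrier := {f | (Function.mulSupport f).Finite}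
  mul_mem' := by
    intro f g hf hg
    exact (hf.union hg).subset (Function.mulSupport_mul f g)
  one_mem' := by simp [Function.mulSupport_one]
  inv_mem' := by
    intro f hf
    simpa [Function.mulSupport_inv] using hf

/-- The shift automorphism of the base. -/
def wrShift (A : Type) [Group A] : MulAut (wrBase A) where
  toFun f := ⟨fun n => (f : ∀ _ : ℤ, A) (n + 1), by
    have hf := f.2
    have : (Function.mulSupport fun n => (f : ∀ _ : ℤ, A) (n + 1)) ⊆
        (fun n : ℤ => n + 1) ⁻¹' Function.mulSupport (f : ∀ _ : ℤ, A) := by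
      intro n hn; exact hn
    exact (hf.preimage (fun x _ y _ h => by omega)).subset this⟩
  invFun f := ⟨fun n => (f : ∀ _ : ℤ, A) (n - 1), by
    have hf := f.2
    have : (Function.mulSupport fun n => (f : ∀ _ : ℤ, A) (n - 1)) ⊆
        (fun n : ℤ => n - 1) ⁻¹' Function.mulSupport (f : ∀ _ : ℤ, A) := by
      intro n hn; exact hn
    exact (hf.preimage (fun x _ y _ h => by omega)).subset this⟩
  left_inv f := by ext n; simp
  right_inv f := by ext n; simp
  map_mul' f g := rfl

/-- `ℤ` acts on the base by shifting coordinates. -/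
def wrAct (A : Type) [Group A] : Multiplicative ℤ →* MulAut (wrBase A) :=
  zpowersHom _ (wrShift A)

/-- The restricted wreath product `A ≀ ℤ`. -/
abbrev Wr (A : Type) [Group A] := wrBase A ⋊[wrAct A] Multiplicative ℤ

/-- The copy of `A` sitting at position `0` of the base, inside `A ≀ ℤ`. -/
def atZero (A : Type) [Group A] : A →* Wr A :=
  SemidirectProduct.inl.comp
    { toFun := fun g => ⟨fun n => if n = 0 then g else 1, by
        apply Set.Finite.subset (Set.finite_singleton (0 : ℤ))
        intro n hn
        simp only [Function.mem_mulSupport] at hn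
        by_contra h
        exact hn (if_neg h)⟩
      map_one' := by ext n; simp
      map_mul' := fun g h => by
        ext n
        by_cases h0 : n = 0 <;> simp [h0] }

/-- A group is residually finite if every nontrivial element survives in some
finite quotient. -/
def ResiduallyFinite (G : Type) [Group G] : Prop :=
  ∀ g : G, g ≠ 1 → ∃ (F : Type) (_ : Group F) (_ : Finite F) (θ : G →* F), θ g ≠ 1

/-!
Let `t` generate the `ℤ` of `A ≀ ℤ` and let `θ` map `A ≀ ℤ` to a finite group. Some power `t ^ m`
with `m > 0` lies in the kernel of `θ`, and conjugation by `t ^ m` moves the copy of `A` at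
position `0` to the copy at position `-m`, which commutes with it elementwise. Writing `a₀` for
`atZero A a`, this makes `θ a₀` commute with `θ (t ^ m b₀ t ^ -m) = θ b₀`, so `θ` kills the
commutator subgroup of the copy at `0`. As that copy embeds, a nonabelian `A` such as `S₃` gives
a nontrivial element that no finite quotient detects.
-/

open Multiplicative

namespace Wr

variable {A : Type} [Group A]

def single (n : ℤ) : A →* wrBase A :=
  (MonoidHom.mulSingle (fun _ : ℤ => A) n).codRestrict (wrBase A) fun _ =>
    (Set.finite_singleton n).subset Pi.mulSupport_mulSingle_subset

@[simp]
lemma coe_single (n : ℤ) (a : A) : (single n a : ℤ → A) = Pi.mulSingle n a := rfl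

lemma single_injective (n : ℤ) : Function.Injective (single (A := A) n) := fun _ _ h =>
  Pi.mulSingle_injective n (congrArg Subtype.val h)

lemma commute_single {n m : ℤ} (hnm : n ≠ m) (a b : A) : Commute (single n a) (single m b) :=
  Subtype.ext (Pi.mulSingle_commute (f := fun _ : ℤ => A) hnm a b)

lemma atZero_eq_inl_single (a : A) : atZero A a = SemidirectProduct.inl (single 0 a) := by
  ext n
  · simp [atZero, Pi.mulSingle_apply]
  · rfl

lemma atZero_injective : Function.Injective (atZero A) := fun a b h =>
  single_injective 0 (SemidirectProduct.inl_injective (by simpa only [atZero_eq_inl_single] using h))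

lemma wrShift_zpow_apply (k : ℤ) (f : wrBase A) (n : ℤ) :
    ((wrShift A ^ k) f : ℤ → A) n = (f : ℤ → A) (n + k) := by
  induction k using Int.induction_on generalizing f n with
  | zero => simp
  | succ k ih =>
    rw [zpow_add_one, MulAut.mul_apply, ih]
    exact congrArg f.1 (by ring)
  | pred k ih =>
    rw [zpow_sub_one, MulAut.mul_apply, ih]
    exact congrArg f.1 (by ring)

lemma wrAct_ofAdd_single (k n : ℤ) (a : A) :
    wrAct A (ofAdd k) (single n a) = single (n - k) a := by
  ext m
  simp only [wrAct, zpowersHom_apply, toAdd_ofAdd, wrShift_zpow_apply, coe_single,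
    Pi.mulSingle_apply, eq_sub_iff_add_eq]

lemma conj_inr_inl_single (k n : ℤ) (a : A) :
    SemidirectProduct.inr (ofAdd k) * SemidirectProduct.inl (single n a) *
        (SemidirectProduct.inr (ofAdd k))⁻¹ =
      (SemidirectProduct.inl (single (n - k) a) : Wr A) := by
  rw [← map_inv, ← SemidirectProduct.inl_aut, wrAct_ofAdd_single]

lemma exists_pos_inr_mem_ker {F : Type} [Group F] [Finite F] (θ : Wr A →* F) :
    ∃ m : ℕ, 0 < m ∧ θ (SemidirectProduct.inr (ofAdd (m : ℤ))) = 1 := by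
  refine ⟨orderOf (θ (SemidirectProduct.inr (ofAdd 1))), orderOf_pos _, ?_⟩
  rw [← nsmul_one, ofAdd_nsmul, map_pow, map_pow, pow_orderOf_eq_one]

lemma commute_map_atZero {F : Type} [Group F] [Finite F] (θ : Wr A →* F) (a b : A) :
    Commute (θ (atZero A a)) (θ (atZero A b)) := by
  obtain ⟨m, hm, hθm⟩ := exists_pos_inr_mem_ker θ
  have hconj := conj_inr_inl_single (m : ℤ) 0 b
  have hcomm : Commute (atZero A a) (SemidirectProduct.inl (single (0 - m) b)) := by
    rw [atZero_eq_inl_single]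
    exact (commute_single (by omega) a b).map SemidirectProduct.inl
  rw [← hconj, ← atZero_eq_inl_single] at hcomm
  simpa only [map_mul, map_inv, hθm, one_mul, inv_one, mul_one] using hcomm.map θ

lemma commutator_le_ker_comp_atZero {F : Type} [Group F] [Finite F] (θ : Wr A →* F) :
    commutator A ≤ (θ.comp (atZero A)).ker := by
  rw [commutator_def, Subgroup.commutator_le]
  intro a _ b _
  rw [MonoidHom.mem_ker, map_commutatorElement]
  exact commutatorElement_eq_one_iff_commute.2 (commute_map_atZero θ a b)

lemma not_residuallyFinite (hA : commutator A ≠ ⊥) : ¬ResiduallyFinite (Wr A) := by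
  intro hRF
  obtain ⟨⟨x, hx⟩, hx1⟩ := Subgroup.ne_bot_iff_exists_ne_one.1 hA
  have hx0 : atZero A x ≠ 1 := (map_ne_one_iff _ atZero_injective).2 fun h => hx1 (Subtype.ext h)
  obtain ⟨F, _, _, θ, hθ⟩ := hRF _ hx0
  exact hθ (commutator_le_ker_comp_atZero θ hx)

end Wr

lemma commutator_perm_fin_three_ne_bot : commutator (Equiv.Perm (Fin 3)) ≠ ⊥ := by
  rw [commutator_def, Ne, Subgroup.commutator_eq_bot_iff_le_centralizer]
  intro h
  have hcomm := Subgroup.mem_centralizer_iff.1 (h (Subgroup.mem_top (Equiv.swap 0 1)))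
    (Equiv.swap 0 2) (Subgroup.mem_top _)
  revert hcomm
  decide

/-- Every homomorphism from `S₃ ≀ ℤ` to a finite group kills
the commutator subgroup of the copy of `S₃` at position `0`; consequently
`S₃ ≀ ℤ` is not residually finite. -/
theorem stmt4 :
    (∀ (F : Type) (_ : Group F) (_ : Finite F)
        (θ : Wr (Equiv.Perm (Fin 3)) →* F),
      ∀ x ∈ commutator (Equiv.Perm (Fin 3)), θ (atZero _ x) = 1) ∧
    ¬ ResiduallyFinite (Wr (Equiv.Perm (Fin 3))) :=
  ⟨fun _ _ _ θ _ hx => Wr.commutator_le_ker_comp_atZero θ hx,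
    Wr.not_residuallyFinite commutator_perm_fin_three_ne_bot⟩
end

section
/- Let $r \geq 2$ and let $X$ be the set of elementary matrices $E_{i,j}^{\pm 1}$ ($1 \leq i < j \leq r$) in the group $UT_r(\mathbb{Z})$ of upper unitriangular $r \times r$ integer matrices. If $w$ is a product of $n$ elements of $X$, then every entry $a$ of the matrix $w$ lying on the $i$-th superdiagonal satisfies $|a| \leq n^i$. -/
/-!
Left multiplication by `1 ± E_{i,j}` adds `±` row `j` to row `i`. By induction on the length of
the product, entry `(k, l)` is bounded by `n ^ (l - k)` on and above the diagonal and vanishes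
below it; the inductive step is `n ^ (l - i) + n ^ (l - j) ≤ (n + 1) ^ (l - i)` for `i < j`.
-/

open Matrix

theorem pow_add_pow_le_add_one_pow {R : Type*} [CommSemiring R] [PartialOrder R]
    [IsOrderedRing R] {x : R} (hx : 0 ≤ x) {a d : ℕ} (had : a < d) :
    x ^ d + x ^ a ≤ (x + 1) ^ d := by
  obtain ⟨e, rfl⟩ : ∃ e, d = e + 1 := ⟨d - 1, by omega⟩
  have hx1 : x ≤ x + 1 := le_add_of_nonneg_right zero_le_one
  have h1 : 1 ≤ x + 1 := le_add_of_nonneg_left hx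
  calc x ^ (e + 1) + x ^ a = x * x ^ e + x ^ a := by ring
    _ ≤ x * (x + 1) ^ e + (x + 1) ^ e := by
      gcongr
      calc x ^ a ≤ (x + 1) ^ a := pow_le_pow_left₀ hx hx1 a
        _ ≤ (x + 1) ^ e := pow_le_pow_right₀ h1 (by omega)
    _ = (x + 1) ^ (e + 1) := by ring

theorem one_add_single_mul_apply {n m R : Type*} [Fintype n] [DecidableEq n] [Semiring R]
    (i j : n) (c : R) (w : Matrix n m R) (k : n) (l : m) :
    ((1 + single i j c : Matrix n n R) * w) k l = w k l + if k = i then c * w j l else 0 := by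
  rw [Matrix.add_mul, Matrix.one_mul, Matrix.add_apply]
  split_ifs with hk
  · rw [hk, single_mul_apply_same]
  · rw [single_mul_apply_of_ne _ _ _ _ _ hk]

section Unitriangular

variable {r : ℕ}

def IsElementaryUnitriangular (A : Matrix (Fin r) (Fin r) ℤ) : Prop :=
  ∃ i j : Fin r, i < j ∧ (A = 1 + single i j 1 ∨ A = 1 - single i j 1)

theorem IsElementaryUnitriangular.exists_eq_one_add_single {A : Matrix (Fin r) (Fin r) ℤ}
    (hA : IsElementaryUnitriangular A) :
    ∃ i j : Fin r, i < j ∧ ∃ c : ℤ, |c| = 1 ∧ A = 1 + single i j c := by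
  obtain ⟨i, j, hij, rfl | rfl⟩ := hA
  · exact ⟨i, j, hij, 1, abs_one, rfl⟩
  · exact ⟨i, j, hij, -1, by simp, by rw [sub_eq_add_neg, ← single_neg]⟩

/-- On the diagonal this is `n ^ 0 = 1`, also for `n = 0`, as the identity matrix requires. -/
def entryBound (n : ℕ) (k l : Fin r) : ℤ :=
  if k ≤ l then (n : ℤ) ^ ((l : ℕ) - k) else 0

theorem abs_one_apply_le_entryBound (k l : Fin r) :
    |(1 : Matrix (Fin r) (Fin r) ℤ) k l| ≤ entryBound 0 k l := by
  unfold entryBound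
  rcases lt_trichotomy k l with hkl | rfl | hlk
  · simp [one_apply_ne hkl.ne, hkl.le]
  · simp
  · simp [one_apply_ne hlk.ne', not_le.mpr hlk]

theorem entryBound_le_succ (n : ℕ) (k l : Fin r) : entryBound n k l ≤ entryBound (n + 1) k l := by
  unfold entryBound
  split_ifs
  · push_cast
    exact pow_le_pow_left₀ n.cast_nonneg (by linarith) _
  · rfl

theorem entryBound_add_le_succ {i j : Fin r} (hij : i < j) (n : ℕ) (l : Fin r) :
    entryBound n i l + entryBound n j l ≤ entryBound (n + 1) i l := by
  unfold entryBound
  have hi : (i : ℕ) < j := hij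
  split_ifs with hil hjl hjl
  · push_cast
    exact pow_add_pow_le_add_one_pow n.cast_nonneg (by have : (j : ℕ) ≤ l := hjl; omega)
  · push_cast
    simpa using pow_le_pow_left₀ n.cast_nonneg (by linarith) _
  · exact absurd (hij.le.trans hjl) hil
  · simp

theorem abs_mul_apply_le_entryBound {A w : Matrix (Fin r) (Fin r) ℤ}
    (hA : IsElementaryUnitriangular A) {n : ℕ} (hw : ∀ k l, |w k l| ≤ entryBound n k l)
    (k l : Fin r) : |(A * w) k l| ≤ entryBound (n + 1) k l := by
  obtain ⟨i, j, hij, c, hc, rfl⟩ := hA.exists_eq_one_add_single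
  rw [one_add_single_mul_apply]
  split_ifs with hki
  · subst hki
    calc |w k l + c * w j l| ≤ |w k l| + |w j l| := by
          simpa [abs_mul, hc] using abs_add_le (w k l) (c * w j l)
      _ ≤ entryBound n k l + entryBound n j l := add_le_add (hw k l) (hw j l)
      _ ≤ entryBound (n + 1) k l := entryBound_add_le_succ hij n l
  · simpa using (hw k l).trans (entryBound_le_succ n k l)

theorem abs_prod_apply_le_entryBound {L : List (Matrix (Fin r) (Fin r) ℤ)}
    (hL : ∀ A ∈ L, IsElementaryUnitriangular A) (k l : Fin r) :
    |L.prod k l| ≤ entryBound L.length k l := by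
  induction L generalizing k l with
  | nil => exact abs_one_apply_le_entryBound k l
  | cons A L ih =>
    rw [List.prod_cons, List.length_cons]
    exact abs_mul_apply_le_entryBound (hL A List.mem_cons_self)
      (ih fun B hB => hL B (List.mem_cons_of_mem A hB)) k l

end Unitriangular

theorem stmt10_general (r : ℕ)
    (L : List (Matrix (Fin r) (Fin r) ℤ))
    (hL : ∀ A ∈ L, ∃ i j : Fin r, i < j ∧
      (A = 1 + Matrix.single i j 1 ∨ A = 1 - Matrix.single i j 1)) :
    ∀ k l : Fin r, k < l →
      |L.prod k l| ≤ (L.length : ℤ) ^ ((l : ℕ) - (k : ℕ)) := by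
  intro k l hkl
  simpa [entryBound, hkl.le] using abs_prod_apply_le_entryBound hL k l

/-- If `w` is a product of `n` elementary unitriangular
matrices `E_{i,j}^{±1}` (`i < j`) in `UT_r(ℤ)`, then every entry of `w` on the
`i`-th superdiagonal (position `(k, l)` with `l - k = i`) has absolute value at
most `n^i`. -/
theorem stmt10 (r : ℕ) (hr : 2 ≤ r)
    (L : List (Matrix (Fin r) (Fin r) ℤ))
    (hL : ∀ A ∈ L, ∃ i j : Fin r, i < j ∧
      (A = 1 + Matrix.single i j 1 ∨ A = 1 - Matrix.single i j 1)) :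
    ∀ k l : Fin r, k < l →
      |L.prod k l| ≤ (L.length : ℤ) ^ ((l : ℕ) - (k : ℕ)) :=
  stmt10_general r L hL
end

section
/- The restricted wreath product $(\mathbb{Z} \wr \mathbb{Z}) \wr \mathbb{Z}$ is not a linear group: it admits no faithful finite-dimensional linear representation over any field. -/
/-!
The base of `(ℤ ≀ ℤ) ≀ ℤ` contains the copies `ι k (ℤ ≀ ℤ)`, `k ∈ ℕ`, of the non-abelian group
`ℤ ≀ ℤ` at the coordinates `k`; copies at distinct coordinates commute elementwise. Fix
non-commuting `x, y ∈ ℤ ≀ ℤ`. Under a faithful representation `φ`, the centralizers of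
`{φ (ι i x), φ (ι i y) | i < k}` in the matrix algebra then form a strictly decreasing chain of
subspaces, since `φ (ι k y)` lies in the `k`-th one but not in the next. This is impossible in
finite dimension.
-/

open Function

theorem exists_commute_of_commute_of_lt (R : Type*) {A : Type*} [CommSemiring R] [Semiring A]
    [Algebra R A] [IsArtinian R A] (a b : ℕ → A)
    (hab : ∀ i k, i < k → Commute (a i) (b k)) (hbb : ∀ i k, i < k → Commute (b i) (b k)) :
    ∃ k, Commute (a k) (b k) := by
  by_contra! hne
  let C : ℕ → Submodule R A := fun k =>
    Subalgebra.toSubmodule (Subalgebra.centralizer R {x | ∃ i < k, x = a i ∨ x = b i})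
  refine not_strictAnti_of_wellFoundedLT C (strictAnti_nat_of_succ_lt fun k => ?_)
  refine SetLike.lt_iff_le_and_exists.2 ⟨?_, b k, ?_, ?_⟩
  · exact Subalgebra.centralizer_le R _ _ fun x ⟨i, hi, hx⟩ => ⟨i, hi.trans k.lt_succ_self, hx⟩
  · rintro x ⟨i, hi, rfl | rfl⟩
    exacts [(hab i k hi).eq, (hbb i k hi).eq]
  · exact fun hb => hne k (hb (a k) ⟨k, k.lt_succ_self, .inl rfl⟩)

theorem not_injective_of_commute_copies (R : Type*) {A G H : Type*} [CommSemiring R] [Semiring A]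
    [Algebra R A] [IsArtinian R A] [Group G] [Group H] (ι : ℕ → H →* G)
    (hι : ∀ i, Injective (ι i)) (hcomm : ∀ i j, i ≠ j → ∀ x y, Commute (ι i x) (ι j y))
    {x y : H} (hxy : ¬Commute x y) (φ : G →* Aˣ) : ¬Injective φ := by
  intro hφ
  obtain ⟨k, hk⟩ := exists_commute_of_commute_of_lt R (fun i => (φ (ι i x) : A))
    (fun i => φ (ι i y)) (fun i k h => ((hcomm i k h.ne x y).map φ).units_val)
    (fun i k h => ((hcomm i k h.ne y y).map φ).units_val)
  exact hxy ((hk.units_of_val.of_map hφ).of_map (hι k))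

section Wreath

variable {A : Type} [Group A]

def wrSingle (i : ℤ) : A →* wrBase A :=
  (MonoidHom.mulSingle (fun _ => A) i).codRestrict (wrBase A) fun _ =>
    (Set.finite_singleton i).subset Pi.mulSupport_mulSingle_subset

theorem wrSingle_injective (i : ℤ) : Injective (wrSingle i : A →* wrBase A) :=
  fun _ _ h => Pi.mulSingle_injective i (congrArg Subtype.val h)

theorem wrSingle_commute {i j : ℤ} (hij : i ≠ j) (g h : A) :
    Commute (wrSingle i g) (wrSingle j h) :=
  Subtype.ext (Pi.mulSingle_commute (f := fun _ : ℤ => A) hij g h)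

def wrCopy (i : ℤ) : A →* Wr A :=
  SemidirectProduct.inl.comp (wrSingle i)

theorem wrCopy_injective (i : ℤ) : Injective (wrCopy i : A →* Wr A) :=
  SemidirectProduct.inl_injective.comp (wrSingle_injective i)

theorem wrCopy_commute {i j : ℤ} (hij : i ≠ j) (g h : A) : Commute (wrCopy i g) (wrCopy j h) :=
  (wrSingle_commute hij g h).map SemidirectProduct.inl

theorem not_commute_inl_wrSingle_inr {g : A} (hg : g ≠ 1) :
    ¬Commute (SemidirectProduct.inl (wrSingle 0 g) : Wr A)
      (SemidirectProduct.inr (Multiplicative.ofAdd 1)) := by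
  intro h
  have h_fix : wrShift A (wrSingle 0 g) = wrSingle 0 g := by
    have h_act : wrAct A (Multiplicative.ofAdd 1) = wrShift A := by simp [wrAct]
    apply SemidirectProduct.inl_injective (φ := wrAct A)
    rw [← h_act, SemidirectProduct.inl_aut, ← h.eq, map_inv, mul_inv_cancel_right]
  have h_at := congrFun (congrArg Subtype.val h_fix) (-1)
  change Pi.mulSingle (M := fun _ : ℤ => A) 0 g (-1 + 1) =
    Pi.mulSingle (M := fun _ : ℤ => A) 0 g (-1) at h_at
  simp [hg] at h_at

end Wreath

/-- The restricted wreath product `(ℤ ≀ ℤ) ≀ ℤ` is not linear: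
it admits no faithful finite-dimensional linear representation over any field. -/
theorem stmt16 :
    ¬ ∃ (n : ℕ) (F : Type) (_ : Field F)
        (φ : Wr (Wr (Multiplicative ℤ)) →* GL (Fin n) F),
      Function.Injective φ := by
  rintro ⟨n, F, _, φ, hφ⟩
  have h_noncomm : ¬Commute (SemidirectProduct.inl (wrSingle 0 (Multiplicative.ofAdd 1)) :
      Wr (Multiplicative ℤ)) (SemidirectProduct.inr (Multiplicative.ofAdd 1)) :=
    not_commute_inl_wrSingle_inr (by simp)
  exact not_injective_of_commute_copies F (fun i : ℕ => wrCopy i) (fun i => wrCopy_injective i)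
    (fun i j hij => wrCopy_commute (Nat.cast_injective.ne hij)) h_noncomm φ hφ
end
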